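/- arXiv:1510.01044 — 2 statements merged into one kernel-verified Lean document; each statement's English description precedes it below -/
import Mathlib

section
/- In the Peano rewrite system, a term is stable (i.e., M σ normalizes to M σ for every substitution σ of normal forms for variables) if and only if it contains no occurrence of the function symbol plus. -/
/-- Terms over the Peano signature {zero, succ, plus} with variables from `V`. -/
inductive PTerm (V : Type) : Type
  | var : V → PTerm V
  | zero : PTerm V
  | succ : PTerm V → PTerm V
  | plus : PTerm V → PTerm V → PTerm V

/-- One-step rewriting: the rules `plus(K,zero) → K` and
`plus(K,succ(M)) → plus(succ(K),M)`, closed under arbitrary term contexts. -/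
inductive PStep {V : Type} : PTerm V → PTerm V → Prop
  | plusZero (K : PTerm V) : PStep (.plus K .zero) K
  | plusSucc (K M : PTerm V) : PStep (.plus K (.succ M)) (.plus (.succ K) M)
  | succCong {M M' : PTerm V} : PStep M M' → PStep (.succ M) (.succ M')
  | plusL {M M' : PTerm V} (N : PTerm V) : PStep M M' → PStep (.plus M N) (.plus M' N)
  | plusR (M : PTerm V) {N N' : PTerm V} : PStep N N' → PStep (.plus M N) (.plus M N')

/-- A normal form is a term to which no rewrite rule applies. -/
def PNF {V : Type} (M : PTerm V) : Prop := ∀ N, ¬ PStep M N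

/-- Homomorphic substitution of terms for variables. -/
def psubst {V : Type} (σ : V → PTerm V) : PTerm V → PTerm V
  | .var v => σ v
  | .zero => .zero
  | .succ M => .succ (psubst σ M)
  | .plus M N => .plus (psubst σ M) (psubst σ N)

/-- A term contains no occurrence of the function symbol `plus`. -/
def noPlus {V : Type} : PTerm V → Prop
  | .var _ => True
  | .zero => True
  | .succ M => noPlus M
  | .plus _ _ => False

lemma zeroNF {V : Type} : PNF (PTerm.zero : PTerm V) := by
  intro N h; cases h

lemma keyL {V : Type} (M : PTerm V) :
    ∀ K : PTerm V, ∃ N, PStep (PTerm.plus K (psubst (fun _ => .zero) M)) N := by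
  induction M with
  | var v => intro K; exact ⟨K, PStep.plusZero K⟩
  | zero => intro K; exact ⟨K, PStep.plusZero K⟩
  | succ M ih => intro K; exact ⟨_, PStep.plusSucc K _⟩
  | plus M₁ M₂ ih₁ ih₂ =>
    intro K
    obtain ⟨N, hN⟩ := ih₂ (psubst (fun _ => .zero) M₁)
    exact ⟨_, PStep.plusR K hN⟩

lemma notNoPlus_step {V : Type} (M : PTerm V) (h : ¬ noPlus M) :
    ∃ N, PStep (psubst (fun _ => .zero) M) N := by
  induction M with
  | var v => exact absurd trivial h
  | zero => exact absurd trivial h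
  | succ M ih =>
    obtain ⟨N, hN⟩ := ih h
    exact ⟨_, PStep.succCong hN⟩
  | plus M₁ M₂ ih₁ ih₂ => exact keyL M₂ _

lemma noPlus_nf {V : Type} (M : PTerm V) (h : noPlus M) (σ : V → PTerm V)
    (hσ : ∀ v, PNF (σ v)) : PNF (psubst σ M) := by
  induction M with
  | var v => exact hσ v
  | zero => exact zeroNF
  | succ M ih =>
    intro N hN
    cases hN with
    | succCong h' => exact ih h _ h'
  | plus M₁ M₂ ih₁ ih₂ => exact absurd h (by simp [noPlus])

/-- a term is stable (for every substitution σ of normal forms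
for variables, Mσ normalizes to itself, i.e. Mσ is a normal form) iff it
contains no occurrence of `plus`. -/
theorem stmt3 {V : Type} (M : PTerm V) :
    (∀ σ : V → PTerm V, (∀ v, PNF (σ v)) → PNF (psubst σ M)) ↔ noPlus M := by
  constructor
  · intro h
    by_contra hnp
    obtain ⟨N, hN⟩ := notNoPlus_step M hnp
    exact h (fun _ => .zero) (fun _ => zeroNF) N hN
  · intro h σ hσ
    exact noPlus_nf M h σ hσ
end

section
/- Well-sorted substitutions cannot lower the sort of a message below impl: if σ substitutes only messages of sort impl for names, then for every message M, sort(Mσ) is impl whenever sort(M) is impl, and sort(Mσ) is never ⊥ when sort(M) is not ⊥. -/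
/-- Messages over the signature {(), pairing, eKey, dKey, enc, enc⁻¹} with names. -/
inductive Msg : Type
  | name : ℕ → Msg
  | unit : Msg
  | pair : Msg → Msg → Msg
  | eKey : Msg → Msg
  | dKey : Msg → Msg
  | enc : Msg → Msg → Msg
  | encInv : Msg → Msg → Msg

/-- Dolev-Yao derivability `Γ ⊩ L`; the left context is a multiset
(order of hypotheses is immaterial). -/
inductive DY : Multiset Msg → List Msg → Prop
  | tru (Γ : Multiset Msg) : DY Γ []
  | id {Γ : Multiset Msg} {L : List Msg} {N : Msg} :
      DY (N ::ₘ Γ) L → DY (N ::ₘ Γ) (N :: L)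
  | copy {Γ : Multiset Msg} {L : List Msg} {N : Msg} :
      DY Γ (N :: L) → DY Γ (N :: N :: L)
  | nil {Γ : Multiset Msg} {L : List Msg} :
      DY Γ L → DY Γ (.unit :: L)
  | pair {Γ : Multiset Msg} {L : List Msg} {N N' : Msg} :
      DY Γ (N :: N' :: L) → DY Γ (.pair N N' :: L)
  | split {Γ : Multiset Msg} {L : List Msg} {N N' : Msg} :
      DY (N ::ₘ N' ::ₘ Γ) L → DY (.pair N N' ::ₘ Γ) L
  | ekey {Γ : Multiset Msg} {L : List Msg} {N : Msg} :
      DY Γ (N :: L) → DY Γ (.eKey N :: L)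
  | dkey {Γ : Multiset Msg} {L : List Msg} {N : Msg} :
      DY Γ (N :: L) → DY Γ (.dKey N :: L)
  | encrypt {Γ : Multiset Msg} {L : List Msg} {N N' : Msg} :
      DY Γ (N :: N' :: L) → DY Γ (.enc N N' :: L)
  | decrypt {Γ : Multiset Msg} {L : List Msg} {N N' : Msg} :
      DY Γ [N'] → DY (N ::ₘ Γ) L → DY (.encInv N N' ::ₘ Γ) L
  | unencrypt {Γ : Multiset Msg} {L : List Msg} {N N' : Msg} :
      DY Γ [N'] → DY (N ::ₘ Γ) L → DY (.enc N (.eKey N') ::ₘ Γ) L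
/-- Substitution of messages for names; homomorphic except that
`enc⁻¹(M1,M2)σ = enc(M1σ, eKey(N))` when `M2σ = dKey(N)`. -/
def msubst (σ : ℕ → Msg) : Msg → Msg
  | .name a => σ a
  | .unit => .unit
  | .pair m n => .pair (msubst σ m) (msubst σ n)
  | .eKey m => .eKey (msubst σ m)
  | .dKey m => .dKey (msubst σ m)
  | .enc m n => .enc (msubst σ m) (msubst σ n)
  | .encInv m n =>
      match msubst σ n with
      | .dKey k => .enc (msubst σ m) (.eKey k)
      | n' => .encInv (msubst σ m) n'

/-- A message is implementable (sort `impl`): no occurrence of `enc⁻¹`. -/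
def noEncInv : Msg → Prop
  | .name _ => True
  | .unit => True
  | .pair m n => noEncInv m ∧ noEncInv n
  | .eKey m => noEncInv m
  | .dKey m => noEncInv m
  | .enc m n => noEncInv m ∧ noEncInv n
  | .encInv _ _ => False

/-- The names (atoms) occurring in a message, as a finite set. -/
def fnames : Msg → Finset ℕ
  | .name a => {a}
  | .unit => ∅
  | .pair m n => fnames m ∪ fnames n
  | .eKey m => fnames m
  | .dKey m => fnames m
  | .enc m n => fnames m ∪ fnames n
  | .encInv m n => fnames m ∪ fnames n

/-- A message does not have sort ⊥: no subterm of the form `enc⁻¹(N1, dKey(N2))`. -/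
def noBad : Msg → Prop
  | .name _ => True
  | .unit => True
  | .pair m n => noBad m ∧ noBad n
  | .eKey m => noBad m
  | .dKey m => noBad m
  | .enc m n => noBad m ∧ noBad n
  | .encInv m n => noBad m ∧ noBad n ∧ ∀ k, n ≠ .dKey k

lemma noEncInv_noBad : ∀ M, noEncInv M → noBad M
  | .name _, _ => trivial
  | .unit, _ => trivial
  | .pair m n, h => ⟨noEncInv_noBad m h.1, noEncInv_noBad n h.2⟩
  | .eKey m, h => noEncInv_noBad m h
  | .dKey m, h => noEncInv_noBad m h
  | .enc m n, h => ⟨noEncInv_noBad m h.1, noEncInv_noBad n h.2⟩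
  | .encInv _ _, h => h.elim
/-- a substitution mapping names to implementable messages
preserves sort `impl` and never produces sort ⊥ from a non-⊥ message. -/
theorem stmt10 (σ : ℕ → Msg) (hσ : ∀ a, noEncInv (σ a)) (M : Msg) :
    (noEncInv M → noEncInv (msubst σ M)) ∧ (noBad M → noBad (msubst σ M)) := by
  induction M with
  | name a => exact ⟨fun _ => hσ a, fun _ => noEncInv_noBad _ (hσ a)⟩
  | unit => exact ⟨fun _ => trivial, fun _ => trivial⟩
  | pair m n ihm ihn =>
      exact ⟨fun h => ⟨ihm.1 h.1, ihn.1 h.2⟩, fun h => ⟨ihm.2 h.1, ihn.2 h.2⟩⟩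
  | eKey m ihm => exact ihm
  | dKey m ihm => exact ihm
  | enc m n ihm ihn =>
      exact ⟨fun h => ⟨ihm.1 h.1, ihn.1 h.2⟩, fun h => ⟨ihm.2 h.1, ihn.2 h.2⟩⟩
  | encInv m n ihm ihn =>
      refine ⟨fun h => h.elim, fun h => ?_⟩
      obtain ⟨hm, hn, hne⟩ := h
      show noBad (match msubst σ n with
        | .dKey k => .enc (msubst σ m) (.eKey k)
        | n' => .encInv (msubst σ m) n')
      rcases e : msubst σ n with a | _ | ⟨a, b⟩ | a | k | ⟨a, b⟩ | ⟨a, b⟩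
      · exact ⟨ihm.2 hm, trivial, fun k h => by cases h⟩
      · exact ⟨ihm.2 hm, trivial, fun k h => by cases h⟩
      · exact ⟨ihm.2 hm, e ▸ ihn.2 hn, fun k h => by cases h⟩
      · exact ⟨ihm.2 hm, e ▸ ihn.2 hn, fun k h => by cases h⟩
      · have := e ▸ ihn.2 hn
        exact ⟨ihm.2 hm, this⟩
      · exact ⟨ihm.2 hm, e ▸ ihn.2 hn, fun k h => by cases h⟩
      · exact ⟨ihm.2 hm, e ▸ ihn.2 hn, fun k h => by cases h⟩
end
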